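/- arXiv:1810.13363 — 2 statements merged into one kernel-verified Lean document; each statement's English description precedes it below -/
import Mathlib

section
/- Let d ≥ 1 and let p be a prime that is not d-exceptional. Then for every α ∈ 𝔽_p there is at most one D ∈ I_d such that D(α) = 0 in 𝔽_p (reducing D mod p); moreover, if D ∈ I_d satisfies D(α) = 0 in 𝔽_p and β ∈ ℂ is a root of D, then for all P, Q ∈ S_d one has P(α) = Q(α) in 𝔽_p if and only if P(β) = Q(β) in ℂ. -/
open Polynomial Filter Asymptotics NumberField

noncomputable section

/-- `S_d`: polynomials of degree at most `d` with coefficients in `{0,1}`. -/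
def SdPolys (d : ℕ) : Set (Polynomial ℤ) :=
  {P | P.natDegree ≤ d ∧ ∀ i, P.coeff i = 0 ∨ P.coeff i = 1}

/-- `S_d(x)`: values at `x` of polynomials of degree at most `d` with coefficients in
`{0,1}`. -/
def Svals {R : Type*} [CommRing R] (d : ℕ) (x : R) : Set R :=
  {y | ∃ P : Polynomial ℤ, P.natDegree ≤ d ∧ (∀ i, P.coeff i = 0 ∨ P.coeff i = 1) ∧
    Polynomial.aeval x P = y}

/-- `S_d^K(x)`: values at `x` of polynomials of degree at most `d` with integer
coefficients in `[-K, K]`. -/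
def SKvals {R : Type*} [CommRing R] (d K : ℕ) (x : R) : Set R :=
  {y | ∃ P : Polynomial ℤ, P.natDegree ≤ d ∧ (∀ i, |P.coeff i| ≤ (K : ℤ)) ∧
    Polynomial.aeval x P = y}

/-- Mahler measure of a complex polynomial: `|a₀| ∏ max 1 |αᵢ|` over its complex roots
(with multiplicity). -/
def mahlerPoly (P : Polynomial ℂ) : ℝ :=
  ‖P.leadingCoeff‖ * (P.roots.map (fun z => max 1 ‖z‖)).prod

/-- The minimal polynomial over `ℤ` of a complex number: the primitive part of the
denominator-cleared minimal polynomial over `ℚ`. -/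
def intMinpoly (α : ℂ) : Polynomial ℤ :=
  (IsLocalization.integerNormalization (nonZeroDivisors ℤ) (minpoly ℚ α)).primPart

/-- Mahler measure `M(α)` of an algebraic number `α`. -/
def mahlerNum (α : ℂ) : ℝ := mahlerPoly ((intMinpoly α).map (Int.castRingHom ℂ))

/-- Lehmer's conjecture: there is `c₀ > 0` with `M(α) > 1 + c₀` for every algebraic
number `α` that is not a root of unity. -/
def LehmerConjecture : Prop :=
  ∃ c₀ : ℝ, 0 < c₀ ∧ ∀ α : ℂ, IsAlgebraic ℚ α →
    (∀ n : ℕ, 0 < n → α ^ n ≠ 1) → 1 + c₀ < mahlerNum α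

/-- A prime `p` is `C`-wild if there is `x ∈ 𝔽_p^×` of multiplicative order at least
`(log₂ p)²` such that not every element of `𝔽_p` is a sum of at most `(log₂ p)^C`
elements (with repetitions allowed) of `{x, x², …, x^⌊C log₂ p⌋}`. -/
def CWild (C : ℝ) (p : ℕ) : Prop :=
  ∃ x : (ZMod p)ˣ, (Real.logb 2 p) ^ 2 ≤ (orderOf x : ℝ) ∧
    ¬ (∀ y : ZMod p, ∃ m : ℕ → ℕ,
        ((∑ i ∈ Finset.Icc 1 ⌊C * Real.logb 2 p⌋₊, m i : ℕ) : ℝ) ≤ (Real.logb 2 p) ^ C ∧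
        y = ∑ i ∈ Finset.Icc 1 ⌊C * Real.logb 2 p⌋₊, (m i) • ((x : ZMod p) ^ i))

/-- A prime `p` is `δ`-bad if there is a nonzero `x` mod `p` of multiplicative order at
least `(log₂ p)(log₂ log₂ log₂ p)` with `|S_d(x)| ≤ p^δ` for all `d ≤ log₂ p`. -/
def DeltaBad (δ : ℝ) (p : ℕ) : Prop :=
  ∃ x : ZMod p, x ≠ 0 ∧
    Real.logb 2 p * Real.logb 2 (Real.logb 2 (Real.logb 2 p)) ≤ (orderOf x : ℝ) ∧
    ∀ d : ℕ, (d : ℝ) ≤ Real.logb 2 p → ((Svals d x).ncard : ℝ) ≤ (p : ℝ) ^ δ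

/-- A prime `p` is `(δ,ε)`-very bad if there is a nonzero `x` mod `p` of multiplicative
order at least `√(p / log₂ p)` with `|S_d^K(x)| ≤ p^δ` for all `d ≤ (1/δ) log₂ p` and
all `K ≤ 2^(εd)`. -/
def VeryBad (δ ε : ℝ) (p : ℕ) : Prop :=
  ∃ x : ZMod p, x ≠ 0 ∧
    Real.sqrt (p / Real.logb 2 p) ≤ (orderOf x : ℝ) ∧
    ∀ d K : ℕ, (d : ℝ) ≤ (1 / δ) * Real.logb 2 p → (K : ℝ) ≤ 2 ^ (ε * d) →
      ((SKvals d K x).ncard : ℝ) ≤ (p : ℝ) ^ δ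

/-- The number of primes up to `X`. -/
def primesUpTo (X : ℕ) : ℕ := {p : ℕ | p ≤ X ∧ p.Prime}.ncard

/-- The number of primes up to `X` satisfying a property `Q`. -/
def primesUpToWith (Q : ℕ → Prop) (X : ℕ) : ℕ := {p : ℕ | p ≤ X ∧ p.Prime ∧ Q p}.ncard

/-- `P_d`: polynomials of degree at most `d` with coefficients in `{-1,0,1}`. -/
def PdPolys (d : ℕ) : Set (Polynomial ℤ) :=
  {P | P.natDegree ≤ d ∧ ∀ i, P.coeff i = 0 ∨ P.coeff i = 1 ∨ P.coeff i = -1}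

/-- `I_d`: monic polynomials, irreducible over `ℚ`, dividing at least one nonzero
element of `P_d`. -/
def IdPolys (d : ℕ) : Set (Polynomial ℤ) :=
  {D | D.Monic ∧ Irreducible (D.map (Int.castRingHom ℚ)) ∧ ∃ P ∈ PdPolys d, P ≠ 0 ∧ D ∣ P}

/-- The Sylvester matrix of two integer polynomials. -/
def sylvester (f g : Polynomial ℤ) :
    Matrix (Fin (g.natDegree + f.natDegree)) (Fin (g.natDegree + f.natDegree)) ℤ :=
  Matrix.of fun i j =>
    if (i : ℕ) < g.natDegree then
      (if (i : ℕ) ≤ (j : ℕ) ∧ (j : ℕ) ≤ (i : ℕ) + f.natDegree then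
        f.coeff (f.natDegree + (i : ℕ) - (j : ℕ)) else 0)
    else
      (if (i : ℕ) - g.natDegree ≤ (j : ℕ) ∧ (j : ℕ) ≤ (i : ℕ) - g.natDegree + g.natDegree then
        g.coeff (g.natDegree + ((i : ℕ) - g.natDegree) - (j : ℕ)) else 0)

/-- The resultant of two integer polynomials, as the determinant of their Sylvester
matrix. -/
def resultantZ (f g : Polynomial ℤ) : ℤ := (_root_.sylvester f g).det

/-- A prime `p` is `d`-exceptional if it divides the resultant of a pair of distinct
elements of `I_d`. -/
def DExceptional (d p : ℕ) : Prop :=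
  ∃ D₁ ∈ IdPolys d, ∃ D₂ ∈ IdPolys d, D₁ ≠ D₂ ∧ (p : ℤ) ∣ resultantZ D₁ D₂

/-- The `ℓ¹`-norm of the coefficients of an integer polynomial. -/
def l1normZ (P : Polynomial ℤ) : ℝ :=
  ∑ i ∈ Finset.range (P.natDegree + 1), |(P.coeff i : ℝ)|

/-- The `ℓ²`-norm of the coefficients of an integer polynomial. -/
def l2normZ (P : Polynomial ℤ) : ℝ :=
  Real.sqrt (∑ i ∈ Finset.range (P.natDegree + 1), (P.coeff i : ℝ) ^ 2)

/-- The `ℓ¹`-norm of the coefficients of a complex polynomial. -/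
def l1normC (P : Polynomial ℂ) : ℝ :=
  ∑ i ∈ Finset.range (P.natDegree + 1), ‖P.coeff i‖

end

/-!
Row `i` of the Sylvester matrix of `f` and `g`, read from right to left, is the coefficient
vector of `X ^ k * f` or `X ^ k * g`; hence the vector of powers of a common root of `f` and `g`
modulo `p` lies in its kernel, and `p` divides the resultant. So if `p` is not `d`-exceptional,
each `α ∈ 𝔽_p` is a root of at most one `D ∈ I_d`.

For `P, Q ∈ S_d` the difference `P - Q` lies in `P_d` and has leading coefficient `±1`. If
`P(α) = Q(α)`, a monic irreducible factor of `±(P - Q)` vanishing at `α` is `ℚ`-irreducible by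
Gauss's lemma, so it lies in `I_d`, hence equals `D`, and `D ∣ P - Q` gives `P(β) = Q(β)`.
Conversely, if `P(β) = Q(β)`, then `D` is the minimal polynomial of `β` over `ℚ`, so it divides
`P - Q` in `ℚ[X]`, hence in `ℤ[X]` as it is monic, and `P(α) = Q(α)`.
-/

theorem sylvester_apply_eq_coeff (f g : ℤ[X]) (i j : Fin (g.natDegree + f.natDegree)) :
    _root_.sylvester f g i j =
      (if (i : ℕ) < g.natDegree then X ^ (g.natDegree - 1 - i) * f
        else X ^ (g.natDegree + f.natDegree - 1 - i) * g).coeff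
        (g.natDegree + f.natDegree - 1 - j) := by
  have := i.isLt
  have := j.isLt
  simp only [_root_.sylvester, Matrix.of_apply]
  split_ifs <;> rw [coeff_X_pow_mul'] <;> split_ifs <;>
    first
    | rfl
    | (congr 1; omega)
    | omega
    | (symm; exact coeff_eq_zero_of_natDegree_lt (by omega))

theorem sum_coeff_rev_mul_pow_eq_aeval {A : Type*} [CommRing A] (α : A) (q : ℤ[X]) {N : ℕ}
    (hq : q.natDegree < N) :
    ∑ j : Fin N, (q.coeff (N - 1 - j) : A) * α ^ (N - 1 - j) = aeval α q := by
  rw [Fin.sum_univ_eq_sum_range (fun j => (q.coeff (N - 1 - j) : A) * α ^ (N - 1 - j)),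
    Finset.sum_range_reflect (fun j => (q.coeff j : A) * α ^ j), aeval_eq_sum_range' hq]
  simp only [zsmul_eq_mul]

theorem resultantZ_cast_eq_zero_of_aeval_eq_zero {A : Type*} [CommRing A] [IsDomain A]
    {α : A} {f g : ℤ[X]} (hf : aeval α f = 0) (hg : aeval α g = 0) (hf₀ : 0 < f.natDegree) :
    (resultantZ f g : A) = 0 := by
  set N := g.natDegree + f.natDegree
  rw [resultantZ, ← eq_intCast (Int.castRingHom A), RingHom.map_det]
  refine Matrix.exists_mulVec_eq_zero_iff.mp ⟨fun j : Fin N => α ^ (N - 1 - j), ?_, ?_⟩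
  · intro h
    simpa using congrFun h ⟨N - 1, by omega⟩
  · ext i
    have hi := i.isLt
    simp only [Matrix.mulVec, dotProduct, RingHom.mapMatrix_apply, Matrix.map_apply,
      sylvester_apply_eq_coeff, eq_intCast, Pi.zero_apply]
    rw [sum_coeff_rev_mul_pow_eq_aeval]
    · split_ifs <;> simp [hf, hg]
    · split_ifs <;>
        exact (natDegree_mul_le_of_le (natDegree_X_pow_le _) le_rfl).trans_lt (by omega)

theorem Polynomial.Monic.exists_irreducible_dvd_aeval_eq_zero {R A : Type*} [CommRing R]
    [NoZeroDivisors R] [CommRing A] [IsDomain A] [Algebra R A] {α : A} {q : R[X]}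
    (hq : q.Monic) (hα : aeval α q = 0) :
    ∃ D : R[X], D.Monic ∧ Irreducible D ∧ D ∣ q ∧ aeval α D = 0 := by
  induction hn : q.natDegree using Nat.strong_induction_on generalizing q with
  | _ n ih =>
    have hq₁ : q ≠ 1 := by rintro rfl; simp at hα
    by_cases hirr : Irreducible q
    · exact ⟨q, hq, hirr, dvd_rfl, hα⟩
    obtain ⟨f, g, hf, hg, rfl, hf₁, hg₁⟩ : ∃ f g : R[X], f.Monic ∧ g.Monic ∧ f * g = q ∧
        f ≠ 1 ∧ g ≠ 1 := by
      simpa [irreducible_of_monic hq hq₁] using hirr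
    have descend : ∀ u v : R[X], u.Monic → v.Monic → v ≠ 1 → (u * v).natDegree = n →
        aeval α u = 0 → ∃ D : R[X], D.Monic ∧ Irreducible D ∧ D ∣ u * v ∧ aeval α D = 0 := by
      intro u v hu hv hv₁ huv hαu
      have hlt : u.natDegree < n := by
        rw [← huv, hu.natDegree_mul hv]
        exact Nat.lt_add_of_pos_right (hv.natDegree_pos.mpr hv₁)
      obtain ⟨D, hD, hDirr, hDu, hαD⟩ := ih _ hlt hu hαu rfl
      exact ⟨D, hD, hDirr, hDu.mul_right v, hαD⟩
    rcases mul_eq_zero.mp ((map_mul _ f g).symm.trans hα) with hαf | hαg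
    · exact descend f g hf hg hg₁ hn hαf
    · rw [mul_comm] at hn ⊢
      exact descend g f hg hf hf₁ hn hαg

theorem Polynomial.Monic.dvd_of_irreducible_map_rat {K : Type*} [Field K] [CharZero K] {β : K}
    {D R : ℤ[X]} (hD : D.Monic) (hirr : Irreducible (D.map (Int.castRingHom ℚ)))
    (hDβ : aeval β D = 0) (hRβ : aeval β R = 0) : D ∣ R := by
  rw [← map_dvd_map (Int.castRingHom ℚ) Int.cast_injective hD, ← algebraMap_int_eq] at *
  have hminpoly : D.map (algebraMap ℤ ℚ) = minpoly ℚ β :=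
    minpoly.eq_of_irreducible_of_monic hirr (by rwa [aeval_map_algebraMap]) (hD.map _)
  rw [hminpoly]
  exact minpoly.dvd ℚ β (by rwa [aeval_map_algebraMap])

theorem sub_mem_PdPolys {d : ℕ} {P Q : ℤ[X]} (hP : P ∈ SdPolys d) (hQ : Q ∈ SdPolys d) :
    P - Q ∈ PdPolys d := by
  refine ⟨(natDegree_sub_le P Q).trans (max_le hP.1 hQ.1), fun i => ?_⟩
  rw [coeff_sub]
  rcases hP.2 i with h₁ | h₁ <;> rcases hQ.2 i with h₂ | h₂ <;> simp [h₁, h₂]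

theorem exists_mem_IdPolys_dvd_aeval_eq_zero {A : Type*} [CommRing A] [IsDomain A] {α : A}
    {d : ℕ} {R : ℤ[X]} (hR : R ∈ PdPolys d) (hR₀ : R ≠ 0) (hα : aeval α R = 0) :
    ∃ D ∈ IdPolys d, D ∣ R ∧ aeval α D = 0 := by
  have hlc : R.leadingCoeff * R.leadingCoeff = 1 := by
    rcases hR.2 R.natDegree with h | h | h
    · exact absurd (leadingCoeff_eq_zero.mp h) hR₀
    all_goals simp [leadingCoeff, h]
  have hunit : IsUnit (C R.leadingCoeff) := isUnit_C.mpr (IsUnit.of_mul_eq_one _ hlc)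
  obtain ⟨D, hD, hDirr, hDS, hαD⟩ :=
    (monic_C_mul_of_mul_leadingCoeff_eq_one hlc).exists_irreducible_dvd_aeval_eq_zero
      (by rw [map_mul, hα, mul_zero] : aeval α (C R.leadingCoeff * R) = 0)
  have hDR : D ∣ R := hunit.dvd_mul_left.mp hDS
  refine ⟨D, ⟨hD, ?_, R, hR, hR₀, hDR⟩, hDR, hαD⟩
  rwa [← algebraMap_int_eq, ← hD.irreducible_iff_irreducible_map_fraction_map]

theorem eq_of_mem_IdPolys_of_aeval_eq_zero {d p : ℕ} [Fact p.Prime] (hexc : ¬ DExceptional d p)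
    {α : ZMod p} {D₁ D₂ : ℤ[X]} (h₁ : D₁ ∈ IdPolys d) (h₂ : D₂ ∈ IdPolys d)
    (hα₁ : aeval α D₁ = 0) (hα₂ : aeval α D₂ = 0) : D₁ = D₂ := by
  by_contra hne
  have hdeg : 0 < D₁.natDegree := h₁.1.natDegree_pos.mpr (by rintro rfl; simp at hα₁)
  refine hexc ⟨D₁, h₁, D₂, h₂, hne, ?_⟩
  exact (ZMod.intCast_zmod_eq_zero_iff_dvd _ p).mp
    (resultantZ_cast_eq_zero_of_aeval_eq_zero hα₁ hα₂ hdeg)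

theorem unique_Id_root_and_partition_eq_general (d : ℕ) (p : ℕ) (hp : p.Prime)
    (hexc : ¬ DExceptional d p) :
    (∀ α : ZMod p, ∀ D₁ ∈ IdPolys d, ∀ D₂ ∈ IdPolys d,
        Polynomial.aeval α D₁ = 0 → Polynomial.aeval α D₂ = 0 → D₁ = D₂) ∧
    (∀ D ∈ IdPolys d, ∀ α : ZMod p, Polynomial.aeval α D = 0 →
      ∀ β : ℂ, Polynomial.aeval β D = 0 →
        ∀ P ∈ SdPolys d, ∀ Q ∈ SdPolys d,
          (Polynomial.aeval α P = Polynomial.aeval α Q ↔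
            Polynomial.aeval β P = Polynomial.aeval β Q)) := by
  have : Fact p.Prime := ⟨hp⟩
  refine ⟨fun α D₁ h₁ D₂ h₂ => eq_of_mem_IdPolys_of_aeval_eq_zero hexc h₁ h₂,
    fun D hD α hαD β hβD P hP Q hQ => ?_⟩
  rw [← sub_eq_zero, ← sub_eq_zero (a := aeval β P), ← map_sub, ← map_sub]
  by_cases hR₀ : P - Q = 0
  · simp [hR₀]
  constructor
  · intro hα
    obtain ⟨D', hD', hD'R, hαD'⟩ :=
      exists_mem_IdPolys_dvd_aeval_eq_zero (sub_mem_PdPolys hP hQ) hR₀ hα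
    obtain rfl := eq_of_mem_IdPolys_of_aeval_eq_zero hexc hD' hD hαD' hαD
    obtain ⟨c, hc⟩ := hD'R
    rw [hc, map_mul, hβD, zero_mul]
  · intro hβ
    obtain ⟨c, hc⟩ := hD.1.dvd_of_irreducible_map_rat hD.2.1 hβD hβ
    rw [hc, map_mul, hαD, zero_mul]

/-- **Claim 1.** Let `d ≥ 1` and let `p` be a prime that is not `d`-exceptional. Then
every `α ∈ 𝔽_p` is a root of at most one `D ∈ I_d` (reduced mod `p`); moreover, if
`D ∈ I_d` satisfies `D(α) = 0` in `𝔽_p` and `β ∈ ℂ` is a root of `D`, then for all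
`P, Q ∈ S_d` one has `P(α) = Q(α)` in `𝔽_p` iff `P(β) = Q(β)` in `ℂ`. -/
theorem unique_Id_root_and_partition_eq (d : ℕ) (hd : 1 ≤ d) (p : ℕ) (hp : p.Prime)
    (hexc : ¬ DExceptional d p) :
    (∀ α : ZMod p, ∀ D₁ ∈ IdPolys d, ∀ D₂ ∈ IdPolys d,
        Polynomial.aeval α D₁ = 0 → Polynomial.aeval α D₂ = 0 → D₁ = D₂) ∧
    (∀ D ∈ IdPolys d, ∀ α : ZMod p, Polynomial.aeval α D = 0 →
      ∀ β : ℂ, Polynomial.aeval β D = 0 →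
        ∀ P ∈ SdPolys d, ∀ Q ∈ SdPolys d,
          (Polynomial.aeval α P = Polynomial.aeval α Q ↔
            Polynomial.aeval β P = Polynomial.aeval β Q)) :=
  unique_Id_root_and_partition_eq_general d p hp hexc
end

section
/- Let 0 < ε < 1/2 and C > 1. Then every sufficiently large prime p that is (1/C, ε)-very bad is C-wild. -/
open Polynomial Filter Asymptotics NumberField

open Real

/- If every residue is a sum of at most `(log₂ p)^C` terms of `{x, …, x^d}` with
`d = ⌊C log₂ p⌋`, then every residue lies in `S_d^K(x)` with `K = ⌊(log₂ p)^C⌋`. Very badness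
bounds `|S_d^K(x)|` by `p^(1/C) < p` as soon as `K ≤ 2^(εd)`, and that holds for large `p`
because `(log₂ p)^C` is polynomial in `log₂ p` while `2^(εd)` is exponential in it. The order
condition is the same comparison: `(log₂ p)^5 ≤ p` gives `(log₂ p)² ≤ √(p / log₂ p)`. -/

lemma eventually_rpow_le_mul_two_rpow (s : ℝ) {b c : ℝ} (hb : 0 < b) (hc : 0 < c) :
    ∀ᶠ L : ℝ in atTop, L ^ s ≤ c * 2 ^ (b * L) := by
  have h := (isLittleO_rpow_exp_pos_mul_atTop s (mul_pos hb (log_pos one_lt_two))).def hc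
  filter_upwards [h, eventually_ge_atTop 0] with L hL hL0
  rw [norm_of_nonneg (rpow_nonneg hL0 s), norm_of_nonneg (exp_pos _).le] at hL
  rwa [rpow_def_of_pos two_pos, mul_comm (log 2), mul_right_comm]

lemma sq_le_sqrt_div_of_pow_five_le {L p : ℝ} (hL : 0 < L) (h : L ^ 5 ≤ p) :
    L ^ 2 ≤ √(p / L) := by
  rw [le_sqrt (by positivity) (div_nonneg ((by positivity : 0 ≤ L ^ 5).trans h) hL.le),
    le_div_iff₀ hL]
  linarith [show (L ^ 2) ^ 2 * L = L ^ 5 by ring]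

lemma natFloor_rpow_le_two_rpow_natFloor {L C ε : ℝ} (hL : 0 ≤ L) (hε : 0 ≤ ε)
    (h : L ^ C ≤ 2 ^ (-ε) * 2 ^ (ε * C * L)) :
    (⌊L ^ C⌋₊ : ℝ) ≤ 2 ^ (ε * ⌊C * L⌋₊) :=
  calc (⌊L ^ C⌋₊ : ℝ) ≤ L ^ C := Nat.floor_le (rpow_nonneg hL C)
    _ ≤ 2 ^ (-ε) * 2 ^ (ε * C * L) := h
    _ = 2 ^ (ε * (C * L - 1)) := by rw [← rpow_add two_pos]; ring_nf
    _ ≤ 2 ^ (ε * ⌊C * L⌋₊) := by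
      gcongr
      · exact one_le_two
      · exact (Nat.sub_one_lt_floor _).le

section SKvals

variable {R : Type*} [CommRing R]

lemma sum_nsmul_pow_mem_SKvals (x : R) {d K : ℕ} {m : ℕ → ℕ}
    (hm : ∑ i ∈ Finset.Icc 1 d, m i ≤ K) :
    ∑ i ∈ Finset.Icc 1 d, m i • x ^ i ∈ SKvals d K x := by
  refine ⟨∑ i ∈ Finset.Icc 1 d, C (m i : ℤ) * X ^ i, ?_, fun j => ?_, ?_⟩
  · exact natDegree_sum_le_of_forall_le _ _ fun i hi =>
      (natDegree_C_mul_X_pow_le _ _).trans (Finset.mem_Icc.mp hi).2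
  · simp only [finsetSum_coeff, coeff_C_mul, coeff_X_pow, mul_ite, mul_one, mul_zero,
      Finset.sum_ite_eq]
    split_ifs with hj
    · rw [abs_of_nonneg (by positivity)]
      exact_mod_cast (Finset.single_le_sum (fun j _ => Nat.zero_le (m j)) hj).trans hm
    · simp
  · simp [nsmul_eq_mul]

lemma SKvals_eq_univ_of_forall_eq_sum (x : R) (d : ℕ) {B : ℝ}
    (h : ∀ y : R, ∃ m : ℕ → ℕ, ((∑ i ∈ Finset.Icc 1 d, m i : ℕ) : ℝ) ≤ B ∧
      y = ∑ i ∈ Finset.Icc 1 d, m i • x ^ i) :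
    SKvals d ⌊B⌋₊ x = Set.univ :=
  Set.eq_univ_of_forall fun y => by
    obtain ⟨m, hmB, rfl⟩ := h y
    exact sum_nsmul_pow_mem_SKvals x (Nat.le_floor hmB)

end SKvals

theorem cWild_of_veryBad_general (ε C : ℝ) (hε : 0 < ε) (hC : 1 < C) :
    ∃ p₀ : ℕ, ∀ p : ℕ, p₀ ≤ p → p.Prime → VeryBad (1 / C) ε p → CWild C p := by
  have hC0 : 0 < C := one_pos.trans hC
  have hlog : Tendsto (fun p : ℕ => logb 2 p) atTop atTop :=
    (tendsto_logb_atTop one_lt_two).comp tendsto_natCast_atTop_atTop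
  obtain ⟨p₀, hp₀⟩ := eventually_atTop.mp <| hlog.eventually <|
    (eventually_gt_atTop 0).and <| (eventually_rpow_le_mul_two_rpow 5 one_pos one_pos).and <|
      eventually_rpow_le_mul_two_rpow C (mul_pos hε hC0) (rpow_pos_of_pos two_pos (-ε))
  refine ⟨p₀, fun p hp₀p hp ⟨x, hx0, hord, hS⟩ => ?_⟩
  have : Fact p.Prime := ⟨hp⟩
  obtain ⟨hL0, hL5, hLC⟩ := hp₀ p hp₀p
  have hp2L : (2 : ℝ) ^ logb 2 p = p := rpow_logb two_pos (by norm_num) (by exact_mod_cast hp.pos)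
  refine ⟨Units.mk0 x hx0, ?_, fun hall => ?_⟩
  · rw [← orderOf_units, Units.val_mk0]
    refine (sq_le_sqrt_div_of_pow_five_le hL0 ?_).trans hord
    rw [← rpow_natCast]
    simpa [hp2L] using hL5
  · have hcover := SKvals_eq_univ_of_forall_eq_sum (x : ZMod p) _ hall
    have hbound := hS _ _ (by rw [one_div_one_div]; exact Nat.floor_le (by positivity))
      (natFloor_rpow_le_two_rpow_natFloor hL0.le hε.le hLC)
    rw [hcover, Set.ncard_univ, Nat.card_zmod] at hbound
    exact hbound.not_gt <| rpow_lt_self_of_one_lt (by exact_mod_cast hp.one_lt)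
      ((div_lt_one hC0).mpr hC)

/-- Let `0 < ε < 1/2` and `C > 1`. Then every sufficiently large prime `p` that is
`(1/C, ε)`-very bad is `C`-wild. -/
theorem cWild_of_veryBad (ε C : ℝ) (hε : 0 < ε) (hε' : ε < 1 / 2) (hC : 1 < C) :
    ∃ p₀ : ℕ, ∀ p : ℕ, p₀ ≤ p → p.Prime → VeryBad (1 / C) ε p → CWild C p :=
  cWild_of_veryBad_general ε C hε hC
end
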